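/- arXiv:1010.5367 — 2 statements merged into one kernel-verified Lean document; each statement's English description precedes it below -/
import Mathlib

section
/- The graph polynomial U_G := det L[I,I], where L is the weighted Laplacian of a connected finite graph G* on vertices {*, 1, ..., V+E} and I = {*, 1, ..., E}, is a homogeneous polynomial of degree V in the edge weights α_{ij}, and every monomial appearing in it has coefficient exactly +1. -/
open scoped Classical

open Matrix Finset

namespace Stmt3Aux

/-- Determinant of a square integer matrix in which every column has entries in `{0,1,-1}`,
at most one `1` and at most one `-1`, is `0`, `1` or `-1`. -/
lemma det_sparse : ∀ (k : ℕ) (M : Matrix (Fin k) (Fin k) ℤ),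
    (∀ i j, M i j = 0 ∨ M i j = 1 ∨ M i j = -1) →
    (∀ j i i', M i j = 1 → M i' j = 1 → i = i') →
    (∀ j i i', M i j = -1 → M i' j = -1 → i = i') →
    M.det = 0 ∨ M.det = 1 ∨ M.det = -1 := by
  intro k
  induction k with
  | zero => intro M _ _ _; simp
  | succ k ih =>
    intro M h0 h1 h2
    by_cases hall : ∀ j, (∃ i, M i j = 1) ∧ (∃ i, M i j = -1)
    · left
      rw [← Matrix.exists_vecMul_eq_zero_iff]
      refine ⟨(fun _ => 1), ?_, ?_⟩
      · intro h
        have := congrFun h 0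
        simp at this
      · funext j
        obtain ⟨⟨i1, hi1⟩, ⟨i2, hi2⟩⟩ := hall j
        have hne : i1 ≠ i2 := by
          rintro rfl; rw [hi1] at hi2; norm_num at hi2
        have hfun : ∀ i, M i j = (Pi.single i1 1 + Pi.single i2 (-1) : Fin (k+1) → ℤ) i := by
          intro i
          rcases eq_or_ne i i1 with rfl | hi1'
          · simp [Pi.single_eq_same, Pi.single_eq_of_ne hne.symm, hi1,
              Pi.single_eq_of_ne hne]
          · rcases eq_or_ne i i2 with rfl | hi2'
            · simp [Pi.single_eq_same, Pi.single_eq_of_ne hi1', hi2]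
            · have : M i j = 0 := by
                rcases h0 i j with h | h | h
                · exact h
                · exact absurd (h1 j i i1 h hi1) hi1'
                · exact absurd (h2 j i i2 h hi2) hi2'
              simp [Pi.single_eq_of_ne hi1', Pi.single_eq_of_ne hi2', this]
        show ∑ i, 1 * M i j = 0
        simp only [one_mul]
        calc ∑ i, M i j
            = ∑ i, (Pi.single i1 1 + Pi.single i2 (-1) : Fin (k+1) → ℤ) i :=
              Finset.sum_congr rfl fun i _ => hfun i
          _ = 0 := by
              simp [Finset.sum_add_distrib, Finset.sum_pi_single]
    · push_neg at hall
      obtain ⟨j, hj⟩ := hall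
      have key : ∀ i i', M i j ≠ 0 → M i' j ≠ 0 → i = i' := by
        intro i i' hi hi'
        rcases h0 i j with h | h | h
        · exact absurd h hi
        all_goals rcases h0 i' j with h' | h' | h'
        · exact absurd h' hi'
        · exact h1 j i i' h h'
        · exact absurd h' (hj ⟨i, h⟩ i')
        · exact absurd h' hi'
        · exact absurd h (hj ⟨i', h'⟩ i)
        · exact h2 j i i' h h'
      by_cases hz : ∀ i, M i j = 0
      · left
        exact Matrix.det_eq_zero_of_column_eq_zero j hz
      · push_neg at hz
        obtain ⟨i0, hi0⟩ := hz
        rw [Matrix.det_succ_column M j, Finset.sum_eq_single i0]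
        · have hm := ih (M.submatrix i0.succAbove j.succAbove)
            (fun i j' => h0 _ _)
            (fun j' i i' hh hh' => Fin.succAbove_right_injective (h1 _ _ _ hh hh'))
            (fun j' i i' hh hh' => Fin.succAbove_right_injective (h2 _ _ _ hh hh'))
          have hpow : ((-1 : ℤ)) ^ ((i0 : ℕ) + (j : ℕ)) = 1 ∨
              ((-1 : ℤ)) ^ ((i0 : ℕ) + (j : ℕ)) = -1 := by
            rcases Nat.even_or_odd ((i0 : ℕ) + (j : ℕ)) with h | h
            · left; exact h.neg_one_pow
            · right; exact h.neg_one_pow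
          rcases h0 i0 j with h | h | h
          · exact absurd h hi0
          all_goals rcases hm with hm | hm | hm <;> rcases hpow with hp | hp <;>
            rw [h, hm, hp] <;> norm_num
        · intro i _ hne
          have : M i j = 0 := by
            by_contra hcon
            exact hne (key i i0 hcon hi0)
          rw [this]; ring
        · simp

lemma det_sparse' {ι : Type*} [Fintype ι] [DecidableEq ι] (M : Matrix ι ι ℤ)
    (h0 : ∀ i j, M i j = 0 ∨ M i j = 1 ∨ M i j = -1)
    (h1 : ∀ j i i', M i j = 1 → M i' j = 1 → i = i')
    (h2 : ∀ j i i', M i j = -1 → M i' j = -1 → i = i') :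
    M.det = 0 ∨ M.det = 1 ∨ M.det = -1 := by
  have e := Fintype.equivFin ι
  rw [← Matrix.det_submatrix_equiv_self e.symm M]
  exact det_sparse _ _ (fun i j => h0 _ _)
    (fun j i i' hh hh' => e.symm.injective (h1 (e.symm j) _ _ hh hh'))
    (fun j i i' hh hh' => e.symm.injective (h2 (e.symm j) _ _ hh hh'))

/-- Expansion of `det (A * B)` as a sum over all functions from rows to the middle type. -/
lemma det_mul_expand {ι κ R : Type*} [Fintype ι] [DecidableEq ι] [Fintype κ] [DecidableEq κ]
    [CommRing R] (A : Matrix ι κ R) (B : Matrix κ ι R) :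
    (A * B).det = ∑ f : ι → κ, (∏ i, A i (f i)) * (B.submatrix f id).det := by
  have hdet : ∀ (M : Matrix ι ι R),
      M.det = ∑ σ : Equiv.Perm ι, (Equiv.Perm.sign σ : ℤ) • ∏ i, M i (σ i) := by
    intro M
    rw [← Matrix.det_transpose, Matrix.det_apply]
    rfl
  calc (A * B).det
      = ∑ σ : Equiv.Perm ι, (Equiv.Perm.sign σ : ℤ) • ∏ i, ∑ j, A i j * B j (σ i) := by
        rw [hdet]
        rfl
    _ = ∑ σ : Equiv.Perm ι, (Equiv.Perm.sign σ : ℤ) •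
          ∑ f ∈ Fintype.piFinset (fun _ : ι => (Finset.univ : Finset κ)),
            ∏ i, A i (f i) * B (f i) (σ i) := by
        refine Finset.sum_congr rfl fun σ _ => ?_
        rw [Finset.prod_univ_sum]
    _ = ∑ f : ι → κ, ∑ σ : Equiv.Perm ι,
          (Equiv.Perm.sign σ : ℤ) • ((∏ i, A i (f i)) * ∏ i, B (f i) (σ i)) := by
        simp only [Fintype.piFinset_univ, Finset.smul_sum]
        rw [Finset.sum_comm]
        refine Finset.sum_congr rfl fun f _ => Finset.sum_congr rfl fun σ _ => ?_
        rw [Finset.prod_mul_distrib]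
    _ = ∑ f : ι → κ, (∏ i, A i (f i)) * (B.submatrix f id).det := by
        refine Finset.sum_congr rfl fun f _ => ?_
        rw [hdet (B.submatrix f id), Finset.mul_sum]
        refine Finset.sum_congr rfl fun σ _ => ?_
        rw [← mul_smul_comm]
        rfl

lemma prod_X_eq_monomial {ι σ R : Type*} [CommSemiring R] (s : Finset ι) (g : ι → σ) :
    ∏ i ∈ s, (MvPolynomial.X (g i) : MvPolynomial σ R) =
      MvPolynomial.monomial (∑ i ∈ s, Finsupp.single (g i) 1) 1 := by
  induction s using Finset.cons_induction with
  | empty => simp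
  | cons a s ha ih =>
      rw [Finset.prod_cons, ih, Finset.sum_cons, MvPolynomial.X,
        MvPolynomial.monomial_mul, one_mul]

section Incidence

variable {α : Type*} [Fintype α] [LinearOrder α] (G : SimpleGraph α)

/-- Signed incidence "matrix": rows are vertices, columns are ordered pairs. -/
noncomputable def bmat : α → α × α → ℤ := fun v e =>
  if e.1 < e.2 ∧ G.Adj e.1 e.2 then (if v = e.1 then 1 else if v = e.2 then -1 else 0) else 0

lemma bmat_of_not_guard {v : α} {e : α × α} (h : ¬(e.1 < e.2 ∧ G.Adj e.1 e.2)) :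
    bmat G v e = 0 := if_neg h

lemma bmat_mem {v : α} {e : α × α} : bmat G v e = 0 ∨ bmat G v e = 1 ∨ bmat G v e = -1 := by
  unfold bmat; split_ifs <;> simp

lemma bmat_eq_one {v : α} {e : α × α} (h : bmat G v e = 1) :
    (e.1 < e.2 ∧ G.Adj e.1 e.2) ∧ v = e.1 := by
  unfold bmat at h; split_ifs at h with h1 h2 h3 <;> first | exact ⟨h1, h2⟩ | norm_num at h

lemma bmat_eq_neg_one {v : α} {e : α × α} (h : bmat G v e = -1) :
    (e.1 < e.2 ∧ G.Adj e.1 e.2) ∧ v = e.2 := by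
  unfold bmat at h; split_ifs at h with h1 h2 h3 <;>
    first | exact ⟨h1, h3⟩ | norm_num at h

lemma bmat_ne_zero {v : α} {e : α × α} (h : bmat G v e ≠ 0) :
    (e.1 < e.2 ∧ G.Adj e.1 e.2) ∧ (v = e.1 ∨ v = e.2) := by
  rcases bmat_mem G (v := v) (e := e) with h' | h' | h'
  · exact absurd h' h
  · exact ⟨(bmat_eq_one G h').1, Or.inl (bmat_eq_one G h').2⟩
  · exact ⟨(bmat_eq_neg_one G h').1, Or.inr (bmat_eq_neg_one G h').2⟩

lemma sum_off {u v : α} (huv : u ≠ v) :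
    ∑ e : α × α, (MvPolynomial.C (bmat G u e) * MvPolynomial.X (Sym2.mk e.1 e.2) *
        MvPolynomial.C (bmat G v e) : MvPolynomial (Sym2 α) ℤ)
      = if G.Adj u v then -MvPolynomial.X s(u, v) else 0 := by
  have key : ∀ u v : α, u < v →
      ∑ e : α × α, (MvPolynomial.C (bmat G u e) * MvPolynomial.X (Sym2.mk e.1 e.2) *
          MvPolynomial.C (bmat G v e) : MvPolynomial (Sym2 α) ℤ)
        = if G.Adj u v then -MvPolynomial.X s(u, v) else 0 := by
    intro u v huv
    rw [Finset.sum_eq_single (u, v)]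
    · by_cases ha : G.Adj u v
      · rw [if_pos ha]
        have hb1 : bmat G u (u, v) = 1 := by
          unfold bmat; rw [if_pos ⟨huv, ha⟩, if_pos rfl]
        have hb2 : bmat G v (u, v) = -1 := by
          unfold bmat
          rw [if_pos ⟨huv, ha⟩, if_neg (ne_of_gt huv), if_pos rfl]
        rw [hb1, hb2]
        simp
      · rw [if_neg ha]
        have hb1 : bmat G u (u, v) = 0 := by
          unfold bmat; rw [if_neg (by tauto)]
        rw [hb1]; simp
    · intro e _ hne
      rcases eq_or_ne (bmat G u e) 0 with h | h
      · rw [h]; simp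
      rcases eq_or_ne (bmat G v e) 0 with h' | h'
      · rw [h']; simp
      exfalso
      obtain ⟨hg, hu⟩ := bmat_ne_zero G h
      obtain ⟨-, hv⟩ := bmat_ne_zero G h'
      rcases hu with hu | hu <;> rcases hv with hv | hv
      · exact huv.ne (hu.trans hv.symm)
      · exact hne (Prod.ext hu.symm hv.symm)
      · exact absurd (hv ▸ hu ▸ hg.1) (asymm huv)
      · exact huv.ne (hu.trans hv.symm)
    · intro h; exact absurd (Finset.mem_univ _) h
  rcases lt_or_gt_of_ne huv with h | h
  · exact key u v h
  · calc ∑ e : α × α, (MvPolynomial.C (bmat G u e) * MvPolynomial.X (Sym2.mk e.1 e.2) *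
          MvPolynomial.C (bmat G v e) : MvPolynomial (Sym2 α) ℤ)
        = ∑ e : α × α, (MvPolynomial.C (bmat G v e) * MvPolynomial.X (Sym2.mk e.1 e.2) *
          MvPolynomial.C (bmat G u e) : MvPolynomial (Sym2 α) ℤ) :=
          Finset.sum_congr rfl fun e _ => by ring
      _ = if G.Adj v u then -MvPolynomial.X s(v, u) else 0 := key v u h
      _ = if G.Adj u v then -MvPolynomial.X s(u, v) else 0 := by
          rw [Sym2.eq_swap, G.adj_comm]

lemma sum_diag (u : α) :
    ∑ e : α × α, (MvPolynomial.C (bmat G u e) * MvPolynomial.X (Sym2.mk e.1 e.2) *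
        MvPolynomial.C (bmat G u e) : MvPolynomial (Sym2 α) ℤ)
      = ∑ l, (if G.Adj u l then MvPolynomial.X s(u, l) else (0 : MvPolynomial (Sym2 α) ℤ)) := by
  have step1 : ∀ e : α × α,
      (MvPolynomial.C (bmat G u e) * MvPolynomial.X (Sym2.mk e.1 e.2) *
        MvPolynomial.C (bmat G u e) : MvPolynomial (Sym2 α) ℤ)
      = (if (e.1 < e.2 ∧ G.Adj e.1 e.2) ∧ u = e.1 then MvPolynomial.X (Sym2.mk e.1 e.2) else 0)
        + (if (e.1 < e.2 ∧ G.Adj e.1 e.2) ∧ u = e.2 then MvPolynomial.X (Sym2.mk e.1 e.2) else 0) := by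
    intro e
    by_cases hg : e.1 < e.2 ∧ G.Adj e.1 e.2
    · by_cases h1 : u = e.1
      · have h2 : u ≠ e.2 := fun hc => absurd hg.1 (by rw [← h1, ← hc]; exact lt_irrefl u)
        have hb : bmat G u e = 1 := by unfold bmat; rw [if_pos hg, if_pos h1]
        rw [hb]
        simp [hg, h1, h2, hg.1.ne]
      · by_cases h2 : u = e.2
        · have hb : bmat G u e = -1 := by
            unfold bmat; rw [if_pos hg, if_neg h1, if_pos h2]
          rw [hb]
          simp [hg, h1, h2, hg.1.ne, hg.1.ne']
        · have hb : bmat G u e = 0 := by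
            unfold bmat; rw [if_pos hg, if_neg h1, if_neg h2]
          rw [hb]
          simp [hg, h1, h2]
    · rw [bmat_of_not_guard G hg]
      simp [hg]
  rw [Finset.sum_congr rfl fun e _ => step1 e, Finset.sum_add_distrib]
  have sumA : ∑ e : α × α,
      (if (e.1 < e.2 ∧ G.Adj e.1 e.2) ∧ u = e.1 then
        (MvPolynomial.X (Sym2.mk e.1 e.2) : MvPolynomial (Sym2 α) ℤ) else 0)
      = ∑ l, (if u < l ∧ G.Adj u l then (MvPolynomial.X s(u, l) : MvPolynomial (Sym2 α) ℤ)
          else 0) := by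
    rw [Fintype.sum_prod_type]
    rw [Finset.sum_eq_single u]
    · refine Finset.sum_congr rfl fun l _ => ?_
      by_cases h : u < l ∧ G.Adj u l <;> simp [h]
    · intro x _ hx
      refine Finset.sum_eq_zero fun y _ => ?_
      rw [if_neg]
      rintro ⟨-, h⟩
      exact hx h.symm
    · intro h; exact absurd (Finset.mem_univ _) h
  have sumB : ∑ e : α × α,
      (if (e.1 < e.2 ∧ G.Adj e.1 e.2) ∧ u = e.2 then
        (MvPolynomial.X (Sym2.mk e.1 e.2) : MvPolynomial (Sym2 α) ℤ) else 0)
      = ∑ l, (if l < u ∧ G.Adj u l then (MvPolynomial.X s(u, l) : MvPolynomial (Sym2 α) ℤ)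
          else 0) := by
    rw [Fintype.sum_prod_type]
    calc ∑ x : α, ∑ y : α,
        (if ((x, y).1 < (x, y).2 ∧ G.Adj (x, y).1 (x, y).2) ∧ u = (x, y).2 then
          (MvPolynomial.X (Sym2.mk (x, y).1 (x, y).2) : MvPolynomial (Sym2 α) ℤ) else 0)
        = ∑ x : α, (if x < u ∧ G.Adj u x then
            (MvPolynomial.X s(u, x) : MvPolynomial (Sym2 α) ℤ) else 0) := by
          refine Finset.sum_congr rfl fun x _ => ?_
          rw [Finset.sum_eq_single u]
          · by_cases h : x < u ∧ G.Adj u x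
            · rw [if_pos ⟨⟨h.1, h.2.symm⟩, rfl⟩, if_pos h, Sym2.eq_swap]
            · rw [if_neg, if_neg h]
              rintro ⟨⟨h1, h2⟩, -⟩
              exact h ⟨h1, h2.symm⟩
          · intro y _ hy
            rw [if_neg]
            rintro ⟨-, h⟩
            exact hy h.symm
          · intro h; exact absurd (Finset.mem_univ _) h
      _ = ∑ l, (if l < u ∧ G.Adj u l then (MvPolynomial.X s(u, l) : MvPolynomial (Sym2 α) ℤ)
          else 0) := rfl
  rw [sumA, sumB, ← Finset.sum_add_distrib]
  refine Finset.sum_congr rfl fun l _ => ?_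
  by_cases ha : G.Adj u l
  · have hne := G.ne_of_adj ha
    rcases lt_or_gt_of_ne hne with h | h
    · rw [if_pos ha, if_pos ⟨h, ha⟩, if_neg (fun hc => asymm h hc.1), add_zero]
    · rw [if_pos ha, if_neg (fun hc => asymm h hc.1), if_pos ⟨h, ha⟩, zero_add]
  · simp [ha]

end Incidence

section Grouping

variable {α : Type*} [Fintype α] [LinearOrder α] (G : SimpleGraph α)
variable {β : Type*} [Fintype β] [DecidableEq β] (emb : β → α)

lemma det_eq_sum_perm {R : Type*} [CommRing R] (M : Matrix β β R) :
    M.det = ∑ σ : Equiv.Perm β, (Equiv.Perm.sign σ : ℤ) • ∏ i, M i (σ i) := by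
  rw [← Matrix.det_transpose, Matrix.det_apply]
  rfl

/-- Monomial exponent associated with a choice of a column for each row. -/
noncomputable def mf (f : β → α × α) : Sym2 α →₀ ℕ :=
  ∑ i : β, Finsupp.single (Sym2.mk (f i).1 (f i).2) 1

noncomputable def cf (f : β → α × α) : ℤ := ∏ i : β, bmat G (emb i) (f i)

noncomputable def Mz (f : β → α × α) : Matrix β β ℤ := fun i j => bmat G (emb j) (f i)

noncomputable def df (f : β → α × α) : ℤ := (Mz G emb f).det

lemma degree_mf (f : β → α × α) : (mf f).degree = Fintype.card β := by
  have h : (mf (α := α) f).degree = Finsupp.weight (1 : Sym2 α → ℕ) (mf f) :=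
    by rw [Finsupp.degree_eq_weight_one] <;> rfl
  rw [h]
  unfold mf
  rw [map_sum]
  have h2 : ∀ i : β, Finsupp.weight (1 : Sym2 α → ℕ)
      (Finsupp.single (Sym2.mk (f i).1 (f i).2) 1) = 1 := by
    intro i
    rw [Finsupp.weight_apply, Finsupp.sum_single_index] <;> simp
  rw [Finset.sum_congr rfl fun i _ => h2 i]
  simp [Finset.card_univ]

lemma sum_coeff_mem (hemb : Function.Injective emb) (m : Sym2 α →₀ ℕ) :
    MvPolynomial.coeff m (∑ f : β → α × α,
        MvPolynomial.monomial (mf f) (cf G emb f * df G emb f)) = 0 ∨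
    MvPolynomial.coeff m (∑ f : β → α × α,
        MvPolynomial.monomial (mf f) (cf G emb f * df G emb f)) = 1 := by
  classical
  have hc : MvPolynomial.coeff m (∑ f : β → α × α,
      MvPolynomial.monomial (mf f) (cf G emb f * df G emb f))
      = ∑ f : β → α × α, if mf f = m then cf G emb f * df G emb f else 0 := by
    rw [MvPolynomial.coeff_sum]
    exact Finset.sum_congr rfl fun f _ => MvPolynomial.coeff_monomial _ _ _
  rw [hc]
  set F : Finset (β → α × α) := Finset.univ.filter
    (fun f => Function.Injective f ∧ (∀ i, (f i).1 < (f i).2 ∧ G.Adj (f i).1 (f i).2) ∧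
      mf f = m) with hF
  have hstep : (∑ f : β → α × α, if mf f = m then cf G emb f * df G emb f else 0)
      = ∑ f ∈ F, cf G emb f * df G emb f := by
    rw [← Finset.sum_filter]
    refine (Finset.sum_subset ?_ ?_).symm
    · intro f hf
      exact Finset.mem_filter.mpr ⟨Finset.mem_univ _, ((Finset.mem_filter.mp hf).2).2.2⟩
    · intro f hf hnf
      have hm' : mf f = m := (Finset.mem_filter.mp hf).2
      by_cases hinj : Function.Injective f
      · by_cases hg : ∀ i, (f i).1 < (f i).2 ∧ G.Adj (f i).1 (f i).2
        · exact absurd (Finset.mem_filter.mpr ⟨Finset.mem_univ _, hinj, hg, hm'⟩) hnf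
        · rw [not_forall] at hg
          obtain ⟨i, hi⟩ := hg
          have hcf : cf G emb f = 0 :=
            Finset.prod_eq_zero (Finset.mem_univ i) (bmat_of_not_guard G hi)
          rw [hcf, zero_mul]
      · rw [Function.not_injective_iff] at hinj
        obtain ⟨a, a', haa, hne⟩ := hinj
        have hdf : df G emb f = 0 := by
          refine Matrix.det_zero_of_row_eq hne (funext fun j => ?_)
          show bmat G (emb j) (f a) = bmat G (emb j) (f a')
          rw [haa]
        rw [hdf, mul_zero]
  rw [hstep]
  rcases Finset.eq_empty_or_nonempty F with hFe | ⟨f₀, hf₀⟩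
  · left; rw [hFe, Finset.sum_empty]
  obtain ⟨hinj₀, hg₀, hm₀⟩ := (Finset.mem_filter.mp hf₀).2
  have hmk : ∀ e e' : α × α, e.1 < e.2 → e'.1 < e'.2 → Sym2.mk e.1 e.2 = Sym2.mk e'.1 e'.2 → e = e' := by
    intro e e' h h' heq
    rcases Sym2.mk_eq_mk_iff.mp heq with h0 | h0
    · exact h0
    · exfalso
      have h1 : e.1 = e'.2 := by rw [h0]; rfl
      have h2 : e.2 = e'.1 := by rw [h0]; rfl
      rw [h1, h2] at h
      exact absurd h (asymm h')
  have happ : ∀ (g : β → α × α) (e : Sym2 α),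
      (mf g) e = ∑ i : β, (if Sym2.mk (g i).1 (g i).2 = e then 1 else 0) := by
    intro g e
    show (∑ i : β, Finsupp.single (Sym2.mk (g i).1 (g i).2) 1) e = _
    rw [Finsupp.finset_sum_apply]
    exact Finset.sum_congr rfl fun j _ => Finsupp.single_apply
  have hrange : ∀ f : β → α × α, (∀ i, (f i).1 < (f i).2 ∧ G.Adj (f i).1 (f i).2) →
      mf f = m → ∀ i, ∃ j, f₀ j = f i := by
    intro f hg hm' i
    have h1 : (mf f₀) (Sym2.mk (f i).1 (f i).2) ≠ 0 := by
      rw [hm₀, ← hm', happ]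
      intro h0
      rw [Finset.sum_eq_zero_iff] at h0
      have := h0 i (Finset.mem_univ i)
      simp at this
    rw [happ] at h1
    obtain ⟨j, hj⟩ : ∃ j, Sym2.mk (f₀ j).1 (f₀ j).2 = Sym2.mk (f i).1 (f i).2 := by
      by_contra hc
      push_neg at hc
      exact h1 (Finset.sum_eq_zero fun j _ => if_neg (hc j))
    exact ⟨j, hmk _ _ (hg₀ j).1 (hg i).1 hj⟩
  have hbij : ∑ f ∈ F, cf G emb f * df G emb f
      = ∑ τ : Equiv.Perm β, cf G emb (f₀ ∘ τ) * df G emb (f₀ ∘ τ) := by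
    symm
    apply Finset.sum_bij (fun (τ : Equiv.Perm β) _ => f₀ ∘ τ)
    · intro τ _
      refine Finset.mem_filter.mpr ⟨Finset.mem_univ _, hinj₀.comp τ.injective,
        fun i => hg₀ (τ i), ?_⟩
      rw [← hm₀]
      exact Equiv.sum_comp τ (fun j => Finsupp.single (Sym2.mk (f₀ j).1 (f₀ j).2) 1)
    · intro τ1 _ τ2 _ h
      ext i
      exact hinj₀ (congrFun h i)
    · intro f hf
      obtain ⟨hinj, hg, hm'⟩ := (Finset.mem_filter.mp hf).2
      choose t ht using hrange f hg hm'
      have tinj : Function.Injective t := by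
        intro a a' h
        apply hinj
        rw [← ht a, ← ht a', h]
      exact ⟨Equiv.ofBijective t (Finite.injective_iff_bijective.mp tinj),
        Finset.mem_univ _, funext fun i => ht i⟩
    · intro τ _; rfl
  rw [hbij]
  have hMzperm : ∀ τ : Equiv.Perm β, Mz G emb (f₀ ∘ τ) = (Mz G emb f₀).submatrix τ id :=
    fun τ => rfl
  have hdf : ∀ τ : Equiv.Perm β,
      df G emb (f₀ ∘ τ) = (Equiv.Perm.sign τ : ℤ) * df G emb f₀ := by
    intro τ
    show (Mz G emb (f₀ ∘ τ)).det = (Equiv.Perm.sign τ : ℤ) * (Mz G emb f₀).det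
    rw [hMzperm τ, Matrix.det_permute]
    norm_cast
  have hcf : ∀ τ : Equiv.Perm β, cf G emb (f₀ ∘ τ) = ∏ i, ((Mz G emb f₀)ᵀ) i (τ i) :=
    fun τ => rfl
  have hS : ∑ τ : Equiv.Perm β, cf G emb (f₀ ∘ τ) * df G emb (f₀ ∘ τ)
      = df G emb f₀ * df G emb f₀ := by
    calc ∑ τ : Equiv.Perm β, cf G emb (f₀ ∘ τ) * df G emb (f₀ ∘ τ)
        = df G emb f₀ * ∑ τ : Equiv.Perm β,
            (Equiv.Perm.sign τ : ℤ) • ∏ i, ((Mz G emb f₀)ᵀ) i (τ i) := by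
          rw [Finset.mul_sum]
          refine Finset.sum_congr rfl fun τ _ => ?_
          rw [hcf, hdf, smul_eq_mul]
          ring
      _ = df G emb f₀ * df G emb f₀ := by
          congr 1
          rw [← det_eq_sum_perm ((Mz G emb f₀)ᵀ), Matrix.det_transpose]
          rfl
  rw [hS]
  have hd : df G emb f₀ = 0 ∨ df G emb f₀ = 1 ∨ df G emb f₀ = -1 := by
    have h := Stmt3Aux.det_sparse' ((Mz G emb f₀)ᵀ)
      (fun i j => bmat_mem G)
      (fun j i i' h h' => hemb ((bmat_eq_one G h).2.trans (bmat_eq_one G h').2.symm))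
      (fun j i i' h h' => hemb ((bmat_eq_neg_one G h).2.trans (bmat_eq_neg_one G h').2.symm))
    rwa [Matrix.det_transpose] at h
  rcases hd with h | h | h <;> rw [h] <;> norm_num

end Grouping

end Stmt3Aux

set_option maxHeartbeats 2000000 in
theorem stmt3 (V E : ℕ)
    (G : SimpleGraph (Fin (E + 1 + V))) (hconn : G.Connected)
    (hstar : ∀ v : Fin (E + 1 + V), E + 1 ≤ (v : ℕ) →
      G.Adj v (⟨0, by omega⟩ : Fin (E + 1 + V)))
    (L : Matrix (Fin (E + 1 + V)) (Fin (E + 1 + V))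
      (MvPolynomial (Sym2 (Fin (E + 1 + V))) ℤ))
    (hL : ∀ i j, L i j =
      if i = j then ∑ l, (if G.Adj j l then MvPolynomial.X s(j, l) else 0)
      else if G.Adj i j then -MvPolynomial.X s(i, j) else 0)
    (U : MvPolynomial (Sym2 (Fin (E + 1 + V))) ℤ)
    (hU : U = (L.submatrix
        (fun a : {x : Fin (E + 1 + V) // ¬ ((x : ℕ) < E + 1)} => (a : Fin (E + 1 + V)))
        (fun a : {x : Fin (E + 1 + V) // ¬ ((x : ℕ) < E + 1)} => (a : Fin (E + 1 + V)))).det) :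
    U.IsHomogeneous V ∧ ∀ m ∈ U.support, U.coeff m = 1 := by
  classical
  let ιt := {x : Fin (E + 1 + V) // ¬ ((x : ℕ) < E + 1)}
  let emb : ιt → Fin (E + 1 + V) := fun a => (a : Fin (E + 1 + V))
  have hemb : Function.Injective emb := Subtype.coe_injective
  let A : Matrix ιt (Fin (E + 1 + V) × Fin (E + 1 + V))
      (MvPolynomial (Sym2 (Fin (E + 1 + V))) ℤ) :=
    fun i e => MvPolynomial.C (Stmt3Aux.bmat G (emb i) e) * MvPolynomial.X (Sym2.mk e.1 e.2)
  let Bm : Matrix (Fin (E + 1 + V) × Fin (E + 1 + V)) ιt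
      (MvPolynomial (Sym2 (Fin (E + 1 + V))) ℤ) :=
    fun e j => MvPolynomial.C (Stmt3Aux.bmat G (emb j) e)
  have hLAB : L.submatrix (fun a : ιt => (a : Fin (E + 1 + V)))
      (fun a : ιt => (a : Fin (E + 1 + V))) = A * Bm := by
    refine Matrix.ext fun p q => ?_
    rw [Matrix.submatrix_apply, Matrix.mul_apply, hL]
    have hABe : ∀ e, A p e * Bm e q
        = MvPolynomial.C (Stmt3Aux.bmat G (emb p) e) * MvPolynomial.X (Sym2.mk e.1 e.2) *
            MvPolynomial.C (Stmt3Aux.bmat G (emb q) e) := fun e => rfl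
    rw [Finset.sum_congr rfl fun e _ => hABe e]
    by_cases hpq : (p : Fin (E + 1 + V)) = (q : Fin (E + 1 + V))
    · rw [if_pos hpq]
      have : emb p = emb q := hpq
      rw [this]
      exact (Stmt3Aux.sum_diag G (emb q)).symm
    · rw [if_neg hpq]
      exact (Stmt3Aux.sum_off G hpq).symm
  rw [hLAB, Stmt3Aux.det_mul_expand] at hU
  have hterm : ∀ f : ιt → Fin (E + 1 + V) × Fin (E + 1 + V),
      (∏ i, A i (f i)) * ((Bm.submatrix f id).det)
        = MvPolynomial.monomial (Stmt3Aux.mf f)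
            (Stmt3Aux.cf G emb f * Stmt3Aux.df G emb f) := by
    intro f
    have h1 : (∏ i, A i (f i))
        = MvPolynomial.C (Stmt3Aux.cf G emb f) *
            MvPolynomial.monomial (Stmt3Aux.mf f) 1 := by
      calc ∏ i, A i (f i)
          = (∏ i, MvPolynomial.C (Stmt3Aux.bmat G (emb i) (f i))) *
              ∏ i, MvPolynomial.X (Sym2.mk (f i).1 (f i).2) := by
            rw [← Finset.prod_mul_distrib]
        _ = MvPolynomial.C (Stmt3Aux.cf G emb f) *
            MvPolynomial.monomial (Stmt3Aux.mf f) 1 := by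
            rw [Stmt3Aux.prod_X_eq_monomial, ← map_prod]
            rfl
    have h2 : (Bm.submatrix f id).det = MvPolynomial.C (Stmt3Aux.df G emb f) := by
      have hmap : Bm.submatrix f id
          = (MvPolynomial.C : ℤ →+* MvPolynomial (Sym2 (Fin (E + 1 + V))) ℤ).mapMatrix
              (Stmt3Aux.Mz G emb f) := rfl
      rw [hmap, ← RingHom.map_det]
      rfl
    rw [h1, h2, mul_right_comm, ← MvPolynomial.C_mul, MvPolynomial.C_mul_monomial, mul_one]
  rw [Finset.sum_congr rfl fun f _ => hterm f] at hU
  have hcard : Fintype.card ιt = V := by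
    have e1 : {x : Fin (E + 1 + V) // ((x : ℕ) < E + 1)} ≃ Fin (E + 1) :=
      { toFun := fun x => ⟨(x : Fin (E + 1 + V)), x.2⟩
        invFun := fun y => ⟨⟨(y : ℕ), by omega⟩, y.isLt⟩
        left_inv := fun x => Subtype.ext (Fin.ext rfl)
        right_inv := fun y => rfl }
    have h1 : Fintype.card {x : Fin (E + 1 + V) // ((x : ℕ) < E + 1)} = E + 1 := by
      rw [Fintype.card_congr e1, Fintype.card_fin]
    have h2 := Fintype.card_subtype_compl (fun x : Fin (E + 1 + V) => (x : ℕ) < E + 1)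
    rw [Fintype.card_fin, h1] at h2
    have h3 : Fintype.card ιt
        = Fintype.card {x : Fin (E + 1 + V) // ¬ ((x : ℕ) < E + 1)} :=
      Fintype.card_congr (Equiv.refl _)
    rw [h3, h2]
    omega
  constructor
  · rw [hU]
    refine MvPolynomial.IsHomogeneous.sum _ _ _ fun f _ =>
      MvPolynomial.isHomogeneous_monomial _ ?_
    rw [Stmt3Aux.degree_mf, hcard]
  · intro m hm
    rw [MvPolynomial.mem_support_iff] at hm
    rw [hU] at hm ⊢
    rcases Stmt3Aux.sum_coeff_mem G emb hemb m with h | h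
    · exact absurd h hm
    · exact h
end

section
/- Let ξ = x + iy ∈ ℂ^{D+1} with y in the open future cone V⁺ of the Minkowski form of signature (-,+,...,+). Then |ξ·ξ| ≥ |y·y|, where ξ·ξ is the complex-bilinear extension of the Minkowski square and |·| is complex modulus. -/
theorem stmt10 (D : ℕ) (x y : Fin (D + 1) → ℝ)
    (hy1 : -(y 0 * y 0) + ∑ k : Fin D, y k.succ * y k.succ < 0)
    (hy2 : 0 < y 0) :
    |(-(y 0 * y 0) + ∑ k : Fin D, y k.succ * y k.succ)| ≤
      ‖
        (-(((x 0 : ℂ) + (y 0 : ℂ) * Complex.I) * ((x 0 : ℂ) + (y 0 : ℂ) * Complex.I)) +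
          ∑ k : Fin D, ((x k.succ : ℂ) + (y k.succ : ℂ) * Complex.I) *
            ((x k.succ : ℂ) + (y k.succ : ℂ) * Complex.I))‖ := by
  set x0 := x 0 with hx0
  set a := y 0 with ha
  set P : ℝ := ∑ k : Fin D, x k.succ * x k.succ with hP
  set Q : ℝ := ∑ k : Fin D, y k.succ * y k.succ with hQ
  set R : ℝ := ∑ k : Fin D, x k.succ * y k.succ with hR
  have hterm : ∀ (u v : ℝ), ((u:ℂ) + (v:ℂ) * Complex.I) * ((u:ℂ) + (v:ℂ) * Complex.I)
      = ((u*u - v*v : ℝ) : ℂ) + ((2*(u*v) : ℝ) : ℂ) * Complex.I := by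
    intro u v
    apply Complex.ext <;> simp [Complex.mul_re, Complex.mul_im, Complex.add_re, Complex.add_im]
      <;> ring
  have hz : (-(((x 0 : ℂ) + (y 0 : ℂ) * Complex.I) * ((x 0 : ℂ) + (y 0 : ℂ) * Complex.I)) +
          ∑ k : Fin D, ((x k.succ : ℂ) + (y k.succ : ℂ) * Complex.I) *
            ((x k.succ : ℂ) + (y k.succ : ℂ) * Complex.I))
      = (((-(x0*x0) + P) - (-(a*a) + Q) : ℝ) : ℂ) + ((2*(-(x0*a) + R) : ℝ) : ℂ) * Complex.I := by
    simp only [hterm]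
    rw [hP, hQ, hR, hx0, ha]
    push_cast
    rw [Finset.sum_add_distrib, Finset.sum_sub_distrib, ← Finset.sum_mul, ← Finset.mul_sum]
    ring
  rw [hz, Complex.norm_add_mul_I]
  -- notation
  have hQpos : (0:ℝ) ≤ Q := Finset.sum_nonneg fun k _ => mul_self_nonneg _
  have hPpos : (0:ℝ) ≤ P := Finset.sum_nonneg fun k _ => mul_self_nonneg _
  have hCS : R^2 ≤ P * Q := by
    have := Finset.sum_mul_sq_le_sq_mul_sq Finset.univ (fun k : Fin D => x k.succ)
      (fun k : Fin D => y k.succ)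
    calc R^2 = (∑ k : Fin D, x k.succ * y k.succ)^2 := by rw [hR]
    _ ≤ (∑ k : Fin D, (x k.succ)^2) * (∑ k : Fin D, (y k.succ)^2) := this
    _ = P * Q := by rw [hP, hQ]; simp [sq]
  have hQa : Q < a * a := by linarith
  -- reverse Cauchy-Schwarz: qx * qy ≤ b^2
  have hrev : (-(x0*x0) + P) * (-(a*a) + Q) ≤ (-(x0*a) + R)^2 := by
    rcases eq_or_lt_of_le hQpos with h0 | h0
    · have hR0 : R = 0 := by nlinarith [sq_nonneg R]
      rw [← h0, hR0]
      nlinarith [mul_self_nonneg a, mul_nonneg hPpos (mul_self_nonneg a)]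
    · nlinarith [sq_nonneg (x0 * Q - a * R), mul_nonneg (le_of_lt (by linarith : (0:ℝ) < a*a - Q))
        (by linarith : (0:ℝ) ≤ P * Q - R^2)]
  have habs : |(-(a*a) + Q)| = -(-(a*a) + Q) := abs_of_neg hy1
  rw [habs]
  have hkey : (-(-(a*a) + Q))^2 ≤ ((-(x0*x0) + P) - (-(a*a) + Q))^2 + (2*(-(x0*a) + R))^2 := by
    set qx := -(x0*x0) + P
    set qy := -(a*a) + Q
    set b := -(x0*a) + R
    have h1 : qx * qy ≤ b^2 := hrev
    nlinarith [sq_nonneg qx, sq_nonneg b]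
  calc -(-(a*a) + Q) = Real.sqrt ((-(-(a*a) + Q))^2) := (Real.sqrt_sq (by linarith)).symm
  _ ≤ Real.sqrt (((-(x0*x0) + P) - (-(a*a) + Q))^2 + (2*(-(x0*a) + R))^2) :=
      Real.sqrt_le_sqrt hkey
end
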